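/- There exists an absolute constant C > 0 such that for all positive integers m and n the series Σ_{r ≥ 1} 2^{ω(r)} · gcd(m, n, r)^{1/2} · r^{−3/2} converges and satisfies Σ_{r ≥ 1} 2^{ω(r)} · gcd(m, n, r)^{1/2} · r^{−3/2} ≤ C·(log(2·gcd(m,n)))², where gcd(m,n,r) denotes the greatest common divisor of m, n and r. -/

import Mathlib

/-!
Write `g = gcd(m, n)` and `w(a) = √gcd(g, a) / a^{3/2}` (`gcdWeight g a`). Since `2^{ω(r)}` is at
most the number of divisors of `r` and `w` is submultiplicative (`gcd(g, ab) ∣ gcd(g, a) gcd(g, b)`),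
the `r`-th term is at most the Dirichlet convolution `(w ∗ w)(r)`, so the series is bounded by
`(Σ w)²`. Bounding `√gcd(g, a)` by the term `d = gcd(g, a)` of a sum over all `d ∣ g`,
`Σ_a w(a) ≤ Σ_{d ∣ g} Σ_{d ∣ a} √d a^{-3/2} = ζ(3/2) Σ_{d ∣ g} 1/d ≤ ζ(3/2) (1 + log g)`,
and `1 + log g ≤ 2 log(2g)`.
-/

open Real

theorem two_pow_card_primeFactors_le_card_divisors {n : ℕ} (hn : n ≠ 0) :
    2 ^ n.primeFactors.card ≤ n.divisors.card := by
  rw [Nat.card_divisors hn]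
  refine Finset.pow_card_le_prod _ _ _ fun p hp => ?_
  have : n.factorization p ≠ 0 := Finsupp.mem_support_iff.mp (n.support_factorization ▸ hp)
  omega

theorem sum_divisors_inv_le_one_add_log (n : ℕ) :
    ∑ d ∈ n.divisors, (d : ℝ)⁻¹ ≤ 1 + log n :=
  calc ∑ d ∈ n.divisors, (d : ℝ)⁻¹ ≤ ∑ d ∈ Finset.Icc 1 n, (d : ℝ)⁻¹ :=
        Finset.sum_le_sum_of_subset_of_nonneg
          (fun d hd => Finset.mem_Icc.mpr ⟨Nat.pos_of_mem_divisors hd, Nat.divisor_le hd⟩)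
          fun _ _ _ => by positivity
    _ = harmonic n := by push_cast [harmonic_eq_sum_Icc]; rfl
    _ ≤ 1 + log n := harmonic_le_one_add_log n

theorem one_add_log_le_two_mul_log_two_mul {x : ℝ} (hx : 1 ≤ x) :
    1 + log x ≤ 2 * log (2 * x) := by
  rw [log_mul two_ne_zero (by positivity)]
  linarith [log_two_gt_d9, log_nonneg hx]

theorem hasSum_sum_divisorsAntidiagonal_mul {R : Type*} [NormedRing R] [CompleteSpace R]
    {f g : ℕ → R} (hf : Summable fun n : ℕ+ => ‖f n‖) (hg : Summable fun n : ℕ+ => ‖g n‖) :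
    HasSum (fun n : ℕ+ => ∑ x ∈ (n : ℕ).divisorsAntidiagonal, f x.1 * g x.2)
      ((∑' n : ℕ+, f n) * ∑' n : ℕ+, g n) := by
  have hprod : HasSum (fun p : ℕ+ × ℕ+ => f p.1 * g p.2)
      ((∑' n : ℕ+, f n) * ∑' n : ℕ+, g n) := by
    rw [tsum_mul_tsum_of_summable_norm hf hg]
    exact (summable_mul_of_summable_norm hf hg).hasSum
  refine (sigmaAntidiagonalEquivProd.hasSum_iff.mpr hprod).sigma fun n => ?_
  rw [← Finset.sum_coe_sort]
  exact hasSum_fintype _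

theorem hasSum_ite_dvd_iff {M : Type*} [AddCommMonoid M] [TopologicalSpace M] (u : ℕ → M)
    (d : ℕ+) {S : M} :
    HasSum (fun a : ℕ+ => if (d : ℕ) ∣ a then u a else 0) S ↔
      HasSum (fun b : ℕ+ => u (d * b)) S := by
  rw [← (mul_right_injective d).hasSum_iff]
  · simp [Function.comp_def]
  · rintro a ha
    rw [if_neg]
    rintro ⟨k, hk⟩
    exact ha ⟨⟨k, Nat.pos_of_mul_pos_left (hk ▸ a.pos)⟩, PNat.coe_injective hk.symm⟩

theorem summable_one_div_pnat_rpow_three_halves :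
    Summable fun b : ℕ+ => 1 / ((b : ℕ) : ℝ) ^ (3 / 2 : ℝ) :=
  (summable_one_div_nat_rpow.mpr (by norm_num)).comp_injective PNat.coe_injective

theorem hasSum_ite_dvd_sqrt_div_rpow (d : ℕ+) :
    HasSum (fun a : ℕ+ => if (d : ℕ) ∣ a then √(d : ℝ) / ((a : ℕ) : ℝ) ^ (3 / 2 : ℝ) else 0)
      ((d : ℝ)⁻¹ * ∑' b : ℕ+, 1 / ((b : ℕ) : ℝ) ^ (3 / 2 : ℝ)) := by
  rw [hasSum_ite_dvd_iff (fun a => √(d : ℝ) / (a : ℝ) ^ (3 / 2 : ℝ))]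
  have hd : (0 : ℝ) < d := by positivity
  have hterm (b : ℕ+) : √(d : ℝ) / (((d : ℕ) * b : ℕ) : ℝ) ^ (3 / 2 : ℝ) =
      (d : ℝ)⁻¹ * (1 / ((b : ℕ) : ℝ) ^ (3 / 2 : ℝ)) := by
    rw [Nat.cast_mul, mul_rpow hd.le (by positivity), sqrt_eq_rpow,
      show (3 / 2 : ℝ) = 1 / 2 + 1 by norm_num, rpow_add_one hd.ne']
    field_simp
  simpa only [hterm] using summable_one_div_pnat_rpow_three_halves.hasSum.mul_left (d : ℝ)⁻¹

theorem hasSum_sum_divisors_ite_dvd (g : ℕ) :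
    HasSum (fun a : ℕ+ => ∑ d ∈ g.divisors,
        if d ∣ (a : ℕ) then √(d : ℝ) / ((a : ℕ) : ℝ) ^ (3 / 2 : ℝ) else 0)
      (∑ d ∈ g.divisors, (d : ℝ)⁻¹ * ∑' b : ℕ+, 1 / ((b : ℕ) : ℝ) ^ (3 / 2 : ℝ)) :=
  hasSum_sum fun d hd => hasSum_ite_dvd_sqrt_div_rpow ⟨d, Nat.pos_of_mem_divisors hd⟩

noncomputable def gcdWeight (g a : ℕ) : ℝ := √(g.gcd a : ℝ) / (a : ℝ) ^ (3 / 2 : ℝ)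

theorem gcdWeight_nonneg (g a : ℕ) : 0 ≤ gcdWeight g a := by
  unfold gcdWeight
  positivity

theorem gcdWeight_mul_le (g : ℕ) {a b : ℕ} (ha : a ≠ 0) (hb : b ≠ 0) :
    gcdWeight g (a * b) ≤ gcdWeight g a * gcdWeight g b := by
  unfold gcdWeight
  rw [div_mul_div_comm, ← sqrt_mul (by positivity), ← mul_rpow (by positivity) (by positivity),
    ← Nat.cast_mul, ← Nat.cast_mul]
  gcongr
  have := Nat.gcd_pos_of_pos_right g (Nat.pos_of_ne_zero ha)
  have := Nat.gcd_pos_of_pos_right g (Nat.pos_of_ne_zero hb)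
  exact Nat.le_of_dvd (by positivity) (gcd_mul_dvd_mul_gcd g a b)

theorem two_pow_card_primeFactors_mul_gcdWeight_le (g : ℕ) {r : ℕ} (hr : r ≠ 0) :
    2 ^ r.primeFactors.card * gcdWeight g r ≤
      ∑ x ∈ r.divisorsAntidiagonal, gcdWeight g x.1 * gcdWeight g x.2 := by
  rw [Nat.sum_divisorsAntidiagonal (fun a b => gcdWeight g a * gcdWeight g b)]
  calc (2 : ℝ) ^ r.primeFactors.card * gcdWeight g r
      ≤ r.divisors.card • gcdWeight g r := by
        rw [nsmul_eq_mul]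
        gcongr
        · exact gcdWeight_nonneg g r
        · exact_mod_cast two_pow_card_primeFactors_le_card_divisors hr
    _ ≤ _ := Finset.card_nsmul_le_sum _ _ _ fun d hd => by
        obtain ⟨hdvd, -⟩ := Nat.mem_divisors.mp hd
        have hd0 := Nat.pos_of_mem_divisors hd
        calc gcdWeight g r = gcdWeight g (d * (r / d)) := by rw [Nat.mul_div_cancel' hdvd]
          _ ≤ _ := gcdWeight_mul_le g hd0.ne'
              (Nat.div_pos (Nat.le_of_dvd (Nat.pos_of_ne_zero hr) hdvd) hd0).ne'

theorem gcdWeight_le_sum_divisors_ite_dvd {g : ℕ} (hg : g ≠ 0) (a : ℕ) :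
    gcdWeight g a ≤ ∑ d ∈ g.divisors, if d ∣ a then √(d : ℝ) / (a : ℝ) ^ (3 / 2 : ℝ) else 0 := by
  have hmem : g.gcd a ∈ g.divisors := Nat.mem_divisors.mpr ⟨Nat.gcd_dvd_left g a, hg⟩
  refine le_of_eq_of_le ?_ (Finset.single_le_sum (fun d _ => ?_) hmem)
  · simp [gcdWeight, Nat.gcd_dvd_right]
  · split_ifs <;> positivity

theorem summable_gcdWeight {g : ℕ} (hg : g ≠ 0) : Summable fun a : ℕ+ => gcdWeight g a :=
  .of_nonneg_of_le (fun a => gcdWeight_nonneg g a) (fun a => gcdWeight_le_sum_divisors_ite_dvd hg a)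
    (hasSum_sum_divisors_ite_dvd g).summable

theorem tsum_gcdWeight_le {g : ℕ} (hg : g ≠ 0) :
    ∑' a : ℕ+, gcdWeight g a ≤ (1 + log g) * ∑' b : ℕ+, 1 / ((b : ℕ) : ℝ) ^ (3 / 2 : ℝ) :=
  calc ∑' a : ℕ+, gcdWeight g a
      ≤ ∑ d ∈ g.divisors, (d : ℝ)⁻¹ * ∑' b : ℕ+, 1 / ((b : ℕ) : ℝ) ^ (3 / 2 : ℝ) :=
        hasSum_le (fun a : ℕ+ => gcdWeight_le_sum_divisors_ite_dvd hg a)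
          (summable_gcdWeight hg).hasSum (hasSum_sum_divisors_ite_dvd g)
    _ ≤ _ := by
        rw [← Finset.sum_mul]
        gcongr
        exact sum_divisors_inv_le_one_add_log g

theorem stmt_4 :
    ∃ C : ℝ, 0 < C ∧ ∀ m n : ℕ, 0 < m → 0 < n →
      Summable (fun r : ℕ+ =>
        (2 : ℝ) ^ (r : ℕ).primeFactors.card * Real.sqrt (Nat.gcd (Nat.gcd m n) r)
          / ((r : ℕ) : ℝ) ^ (3 / 2 : ℝ)) ∧
      (∑' r : ℕ+,
        (2 : ℝ) ^ (r : ℕ).primeFactors.card * Real.sqrt (Nat.gcd (Nat.gcd m n) r)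
          / ((r : ℕ) : ℝ) ^ (3 / 2 : ℝ))
        ≤ C * Real.log (2 * Nat.gcd m n) ^ 2 := by
  set Z := ∑' b : ℕ+, 1 / ((b : ℕ) : ℝ) ^ (3 / 2 : ℝ)
  have hZ : 0 < Z :=
    summable_one_div_pnat_rpow_three_halves.tsum_pos (fun b => by positivity) 1 (by norm_num)
  refine ⟨(2 * Z) ^ 2, by positivity, fun m n hm _ => ?_⟩
  set g := m.gcd n
  have hg : g ≠ 0 := (Nat.gcd_pos_of_pos_left n hm).ne'
  have hnorm : Summable fun a : ℕ+ => ‖gcdWeight g a‖ := by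
    simpa only [norm_of_nonneg (gcdWeight_nonneg _ _)] using summable_gcdWeight hg
  have hconv := hasSum_sum_divisorsAntidiagonal_mul hnorm hnorm
  have hle (r : ℕ+) : (2 : ℝ) ^ (r : ℕ).primeFactors.card * √(g.gcd r : ℝ)
      / ((r : ℕ) : ℝ) ^ (3 / 2 : ℝ) ≤
      ∑ x ∈ (r : ℕ).divisorsAntidiagonal, gcdWeight g x.1 * gcdWeight g x.2 := by
    rw [mul_div_assoc]
    exact two_pow_card_primeFactors_mul_gcdWeight_le g r.ne_zero
  have hsum := hconv.summable.of_nonneg_of_le (fun r => by positivity) hle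
  refine ⟨hsum, ?_⟩
  have hg1 : (1 : ℝ) ≤ g := by exact_mod_cast Nat.one_le_iff_ne_zero.mpr hg
  calc _ ≤ (∑' a : ℕ+, gcdWeight g a) * ∑' a : ℕ+, gcdWeight g a := hasSum_le hle hsum.hasSum hconv
    _ ≤ ((1 + log g) * Z) * ((1 + log g) * Z) :=
        mul_self_le_mul_self (tsum_nonneg fun a => gcdWeight_nonneg g a) (tsum_gcdWeight_le hg)
    _ ≤ (2 * log (2 * g) * Z) * (2 * log (2 * g) * Z) :=
        mul_self_le_mul_self (mul_nonneg (by linarith [log_nonneg hg1]) hZ.le)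
          (mul_le_mul_of_nonneg_right (one_add_log_le_two_mul_log_two_mul hg1) hZ.le)
    _ = (2 * Z) ^ 2 * log (2 * g) ^ 2 := by ring
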